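/- arXiv:1002.2790 — 4 statements merged into one kernel-verified Lean document; each statement's English description precedes it below -/
import Mathlib

section
/- Let (b_k) be a sequence of real numbers with ∑_{k=1}^∞ k|b_k| < ∞, and define ξ_n = -∑_{k=n+1}^∞ b_k. Then ∑_{n=1}^∞ n ξ_n² ≤ (∑_{k=1}^∞ k|b_k|)². -/
/-! Put `T n = ∑_{k>n} |b k|` and `S = ∑ k |b k|`. Then `|ξ n| ≤ T n`, and `n * T n ≤ S` because
every index in the tail exceeds `n`. Exchanging the order of summation in `∑_n ∑_{k>n} |b k|`
gives `∑ T n = S`, so `∑ n ξ_n² ≤ ∑ (n * T n) * T n ≤ S * ∑ T n = S²`. -/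

section TailSums

variable {a : ℕ → ℝ}

lemma tsum_ite_lt_eq_nat_mul (c : ℝ) (k : ℕ) : ∑' n : ℕ, (if n < k then c else 0) = k * c := by
  rw [tsum_eq_sum (s := Finset.range k) fun n hn => if_neg (by simpa using hn),
    Finset.sum_ite_of_true fun n hn => Finset.mem_range.1 hn, Finset.sum_const, Finset.card_range,
    nsmul_eq_mul]

lemma tsum_ite_lt_eq_tsum_tail (a : ℕ → ℝ) (n : ℕ) :
    ∑' k : ℕ, (if n < k then a k else 0) = ∑' j : ℕ, a (n + 1 + j) := by
  have hsupp : Function.support (fun k => if n < k then a k else 0) ⊆ Set.range (n + 1 + ·) :=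
    fun k hk => ⟨k - (n + 1), by dsimp only; have := (ite_ne_right_iff.1 hk).1; omega⟩
  rw [← (add_right_injective (n + 1)).tsum_eq hsupp]
  exact tsum_congr fun j => if_pos (by omega)

variable (ha : 0 ≤ a) (h : Summable fun k : ℕ => (k : ℝ) * a k)
include ha h

lemma summable_tail_of_summable_nat_mul (n : ℕ) : Summable fun j => a (n + 1 + j) := by
  refine (h.comp_injective (add_right_injective (n + 1))).of_nonneg_of_le (fun j => ha _)
    fun j => ?_
  have : (1 : ℝ) ≤ (n + 1 + j : ℕ) := by norm_cast; omega
  exact le_mul_of_one_le_left (ha _) this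

lemma nat_mul_tsum_tail_le (n : ℕ) : n * ∑' j, a (n + 1 + j) ≤ ∑' k : ℕ, k * a k := by
  have hle : ∀ j, (n : ℝ) * a (n + 1 + j) ≤ (n + 1 + j : ℕ) * a (n + 1 + j) := fun j => by
    gcongr
    · exact ha _
    · omega
  calc (n : ℝ) * ∑' j, a (n + 1 + j) = ∑' j, (n : ℝ) * a (n + 1 + j) := tsum_mul_left.symm
    _ ≤ ∑' j, ((n + 1 + j : ℕ) : ℝ) * a (n + 1 + j) :=
      ((summable_tail_of_summable_nat_mul ha h n).mul_left _).tsum_le_tsum hle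
        (h.comp_injective (add_right_injective (n + 1)))
    _ ≤ ∑' k : ℕ, k * a k :=
      tsum_comp_le_tsum_of_inj h (fun k => mul_nonneg k.cast_nonneg (ha k))
        (add_right_injective (n + 1))

lemma hasSum_tsum_tail : HasSum (fun n => ∑' j, a (n + 1 + j)) (∑' k : ℕ, k * a k) := by
  -- `G (k, n)`: row `k` sums to `k * a k`, column `n` to the `n`-th tail
  set G : ℕ × ℕ → ℝ := fun p => if p.2 < p.1 then a p.1 else 0
  have hrow (k : ℕ) : ∑' n, G (k, n) = k * a k := tsum_ite_lt_eq_nat_mul (a k) k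
  have hG : Summable G := by
    refine (summable_prod_of_nonneg fun p => ?_).2 ⟨fun k => ?_, ?_⟩
    · dsimp only [G]; split_ifs; exacts [ha _, le_rfl]
    · exact summable_of_ne_finset_zero (s := Finset.range k) fun n hn => if_neg (by simpa using hn)
    · simpa only [hrow] using h
  have hcolumn (n : ℕ) : HasSum (fun k => G (k, n)) (∑' j, a (n + 1 + j)) := by
    rw [← tsum_ite_lt_eq_tsum_tail]
    exact (hG.prod_symm.prod_factor n).hasSum
  have hsum := hG.prod_symm.hasSum.prod_fiberwise hcolumn
  rwa [show ∑' p : ℕ × ℕ, G p.swap = ∑' p, G p from (Equiv.prodComm ℕ ℕ).tsum_eq G,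
    hG.tsum_prod, tsum_congr hrow] at hsum

end TailSums

/-- If `∑ k |b k| < ∞` then the tails `ξ n = -∑_{k>n} b k` satisfy
`∑ n ξ_n² ≤ (∑ k |b k|)²`. -/
theorem stmt_0 (b : ℕ → ℝ) (hb : Summable fun k : ℕ => (k : ℝ) * |b k|)
    (ξ : ℕ → ℝ) (hξ : ∀ n, ξ n = -∑' k : ℕ, b (n + 1 + k)) :
    ∑' n : ℕ, (n : ℝ) * (ξ n) ^ 2 ≤ (∑' k : ℕ, (k : ℝ) * |b k|) ^ 2 := by
  have habs : 0 ≤ fun k => |b k| := fun k => abs_nonneg _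
  set S := ∑' k : ℕ, (k : ℝ) * |b k|
  set T : ℕ → ℝ := fun n => ∑' j, |b (n + 1 + j)|
  have hT : HasSum T S := hasSum_tsum_tail habs hb
  have hξT (n : ℕ) : |ξ n| ≤ T n := by
    rw [hξ, abs_neg]
    simpa only [Real.norm_eq_abs] using
      norm_tsum_le_tsum_norm (f := fun j => b (n + 1 + j))
        (summable_tail_of_summable_nat_mul habs hb n)
  have hterm (n : ℕ) : (n : ℝ) * ξ n ^ 2 ≤ S * T n :=
    calc (n : ℝ) * ξ n ^ 2 ≤ n * T n ^ 2 :=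
          mul_le_mul_of_nonneg_left (sq_le_sq.2 ((hξT n).trans (le_abs_self _))) n.cast_nonneg
      _ = (n * T n) * T n := by ring
      _ ≤ S * T n :=
          mul_le_mul_of_nonneg_right (nat_mul_tsum_tail_le habs hb n)
            (tsum_nonneg fun j => abs_nonneg _)
  have hST : Summable fun n => S * T n := hT.summable.mul_left S
  calc ∑' n : ℕ, (n : ℝ) * ξ n ^ 2 ≤ ∑' n, S * T n :=
        (hST.of_nonneg_of_le (fun n => by positivity) hterm).tsum_le_tsum hterm hST
    _ = S ^ 2 := by rw [tsum_mul_left, hT.tsum_eq, sq]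
end

section
/- If a real sequence (b_k) satisfies ∑_{k=1}^∞ k|b_k| < ∞, then the tails ξ_n = -∑_{k>n} b_k satisfy (ξ_n) ∈ ℓ²₁, i.e., ∑_{n=1}^∞ n|ξ_n|² < ∞. -/
/-!
Put `T n = ∑_{k>n} |b k|` and `S = ∑ k |b k|`. Then `|ξ n| ≤ T n` and
`n T n ≤ ∑_{k>n} k |b k| ≤ S`, so `n |ξ n|² ≤ S T n`. Finally `∑ n, T n = S`, because each
`|b m|` occurs in `T n` exactly for the `m` indices `n < m`; hence `(T n)` is summable.
-/

open Finset

section Tails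

variable {a : ℕ → ℝ}

lemma summable_comp_add_of_summable_natCast_mul (ha : ∀ k, 0 ≤ a k)
    (h : Summable fun k : ℕ => (k : ℝ) * a k) (n : ℕ) :
    Summable fun k => a (n + 1 + k) :=
  (h.comp_injective (add_right_injective (n + 1))).of_nonneg_of_le (fun _ => ha _)
    fun k => le_mul_of_one_le_left (ha _) (Nat.one_le_cast.mpr (by omega))

lemma natCast_mul_tsum_tail_le (ha : ∀ k, 0 ≤ a k)
    (h : Summable fun k : ℕ => (k : ℝ) * a k) (n : ℕ) :
    n * ∑' k, a (n + 1 + k) ≤ ∑' k : ℕ, (k : ℝ) * a k := by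
  rw [← tsum_mul_left]
  calc ∑' k, n * a (n + 1 + k)
      ≤ ∑' k, ((n + 1 + k : ℕ) : ℝ) * a (n + 1 + k) :=
        ((summable_comp_add_of_summable_natCast_mul ha h n).mul_left (n : ℝ)).tsum_le_tsum
          (fun k => mul_le_mul_of_nonneg_right (by norm_cast; omega) (ha _))
          (h.comp_injective (add_right_injective (n + 1)))
    _ ≤ ∑' k : ℕ, (k : ℝ) * a k :=
        tsum_comp_le_tsum_of_inj h (fun k => mul_nonneg k.cast_nonneg (ha k))
          (add_right_injective (n + 1))

lemma summable_tsum_tail (ha : ∀ k, 0 ≤ a k) (h : Summable fun k : ℕ => (k : ℝ) * a k) :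
    Summable fun n => ∑' k, a (n + 1 + k) := by
  let f : ℕ × ℕ → ℝ := fun p => a (p.1 + 1 + p.2)
  suffices Summable f from this.prod
  rw [← HasAntidiagonal.sigmaAntidiagonalEquivProd.summable_iff]
  refine (summable_sigma_of_nonneg fun _ => ha _).mpr ⟨fun _ => (hasSum_fintype _).summable, ?_⟩
  have hfiber (m : ℕ) : ∑' p : antidiagonal m, f p = ((m + 1 : ℕ) : ℝ) * a (m + 1) := by
    have hp (p : antidiagonal m) : f p = a (m + 1) := by
      have := mem_antidiagonal.mp p.2
      simp only [f]
      congr 1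
      omega
    rw [tsum_congr hp, tsum_const, Nat.card_eq_fintype_card, Fintype.card_coe,
      Nat.card_antidiagonal, nsmul_eq_mul]
  exact (h.comp_injective (add_left_injective 1)).congr fun m => (hfiber m).symm

end Tails

/-- If `∑ k |b k| < ∞` then the tails `ξ n = -∑_{k>n} b k` lie in `ℓ²₁`. -/
theorem stmt_1 (b : ℕ → ℝ) (hb : Summable fun k : ℕ => (k : ℝ) * |b k|)
    (ξ : ℕ → ℝ) (hξ : ∀ n, ξ n = -∑' k : ℕ, b (n + 1 + k)) :
    Summable fun n : ℕ => (n : ℝ) * |ξ n| ^ 2 := by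
  have habs (k : ℕ) : 0 ≤ |b k| := abs_nonneg _
  set T : ℕ → ℝ := fun n => ∑' k, |b (n + 1 + k)|
  set S := ∑' k : ℕ, (k : ℝ) * |b k|
  have hT_nonneg (n : ℕ) : 0 ≤ T n := tsum_nonneg fun _ => habs _
  have hξ_le (n : ℕ) : |ξ n| ≤ T n := by
    rw [hξ n, abs_neg]
    exact norm_tsum_le_tsum_norm (f := fun k => b (n + 1 + k))
      (summable_comp_add_of_summable_natCast_mul habs hb n)
  have hbound (n : ℕ) : (n : ℝ) * |ξ n| ^ 2 ≤ S * T n :=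
    calc (n : ℝ) * |ξ n| ^ 2 = (n * |ξ n|) * |ξ n| := by ring
      _ ≤ (n * T n) * T n :=
        mul_le_mul (mul_le_mul_of_nonneg_left (hξ_le n) n.cast_nonneg) (hξ_le n) (abs_nonneg _)
          (mul_nonneg n.cast_nonneg (hT_nonneg n))
      _ ≤ S * T n := mul_le_mul_of_nonneg_right (natCast_mul_tsum_tail_le habs hb n) (hT_nonneg n)
  exact ((summable_tsum_tail habs hb).mul_left S).of_nonneg_of_le (fun n => by positivity) hbound
end

section
/- Let s be a measurable function on the unit circle satisfying s(t̄) = conj(s(t)) = 1/s(t) a.e. Then |s(t)| = 1 a.e., and if s admits a representation s(t) = (-1)^γ t^j e^{-i w(t)} with w real-valued, antisymmetric (w(t̄) = -w(t)), continuous, and with w in B₂^{1/2}, then the pair (γ mod 2, j) is uniquely determined by s. -/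
/-! Two continuous representations that agree a.e. agree everywhere. At `t = 1` the
antisymmetric phases vanish, so the signs agree. After cancelling them,
`θ ↦ 2πjθ/T - w θ` and `θ ↦ 2πj'θ/T - w' θ` are continuous lifts through the covering
`Circle.exp : ℝ → 𝕊¹` of the same map, equal at `0`, hence equal. At `θ = T` the phases vanish
again, which gives `j = j'` and then `w = w'`. -/

open MeasureTheory AddCircle Complex

instance : Fact (0 < 2 * Real.pi) := ⟨by positivity⟩

theorem norm_eq_one_of_conj_eq_inv {z : ℂ} (hz : z ≠ 0) (h : starRingEnd ℂ z = z⁻¹) :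
    ‖z‖ = 1 := by
  have hsq : ((‖z‖ ^ 2 : ℝ) : ℂ) = 1 := by
    rw [ofReal_pow, ← mul_conj', h, mul_inv_cancel₀ hz]
  exact (pow_eq_one_iff_of_nonneg (norm_nonneg z) two_ne_zero).mp (by exact_mod_cast hsq)

theorem mod_two_eq_of_neg_one_pow_eq {R : Type*} [Ring R] (hR : (-1 : R) ≠ 1) {m n : ℕ}
    (h : (-1 : R) ^ m = (-1) ^ n) : m % 2 = n % 2 := by
  rw [neg_one_pow_eq_pow_mod_two, neg_one_pow_eq_pow_mod_two (n := n)] at h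
  rcases Nat.mod_two_eq_zero_or_one m with hm | hm <;>
    rcases Nat.mod_two_eq_zero_or_one n with hn | hn <;>
    simp_all [eq_comm]

theorem eq_of_continuous_of_exp_mul_I_eq {X : Type*} [TopologicalSpace X] [PreconnectedSpace X]
    {f g : X → ℝ} (hf : Continuous f) (hg : Continuous g)
    (h : ∀ x, exp (f x * I) = exp (g x * I)) (a : X) (ha : f a = g a) : f = g :=
  Circle.isCoveringMap_exp.eq_of_comp_eq hf hg (funext fun x => Circle.ext <| by simpa using h x)
    a ha

section IndexRep

variable {T : ℝ}

/-- The function `t ↦ (-1)^γ tʲ e^{-i w(t)}`, with `t = e^{2πix/T}`. -/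
noncomputable def indexRep (γ : ℕ) (j : ℤ) (w : AddCircle T → ℝ) (x : AddCircle T) : ℂ :=
  (-1) ^ γ * fourier j x * exp (-I * w x)

theorem continuous_indexRep (γ : ℕ) (j : ℤ) {w : AddCircle T → ℝ} (hw : Continuous w) :
    Continuous (indexRep γ j w) := by
  unfold indexRep
  fun_prop

theorem indexRep_zero (γ : ℕ) (j : ℤ) {w : AddCircle T → ℝ} (hw : w.Odd) :
    indexRep γ j w 0 = (-1) ^ γ := by
  simp [indexRep, hw.map_zero]

theorem indexRep_coe (γ : ℕ) (j : ℤ) (w : AddCircle T → ℝ) (θ : ℝ) :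
    indexRep γ j w θ = (-1) ^ γ * exp (↑(2 * Real.pi * j * θ / T - w θ) * I) := by
  rw [indexRep, fourier_coe_apply, mul_assoc, ← Complex.exp_add]
  congr 3
  push_cast
  ring

theorem indexRep_injective (hT : T ≠ 0) {γ γ' : ℕ} {j j' : ℤ} {w w' : AddCircle T → ℝ}
    (hw : Continuous w) (hw_odd : w.Odd) (hw' : Continuous w') (hw'_odd : w'.Odd)
    (h : indexRep γ j w = indexRep γ' j' w') : γ % 2 = γ' % 2 ∧ j = j' ∧ w = w' := by
  have hsign : (-1 : ℂ) ^ γ = (-1) ^ γ' := by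
    simpa [indexRep_zero, hw_odd, hw'_odd] using congrFun h 0
  set φ : ℤ → (AddCircle T → ℝ) → ℝ → ℝ := fun k v θ => 2 * Real.pi * k * θ / T - v θ
  have hφ : φ j w = φ j' w' := by
    refine eq_of_continuous_of_exp_mul_I_eq (by fun_prop) (by fun_prop) (fun θ => ?_) 0
      (by simp [φ, hw_odd.map_zero, hw'_odd.map_zero])
    have hθ := congrFun h θ
    rw [indexRep_coe, indexRep_coe, hsign] at hθ
    exact mul_left_cancel₀ (pow_ne_zero _ (by norm_num)) hθ
  have hjj' : j = j' := by
    have hT' := congrFun hφ T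
    simp only [φ, coe_period, hw_odd.map_zero, hw'_odd.map_zero, sub_zero,
      mul_div_cancel_right₀ _ hT] at hT'
    exact_mod_cast mul_left_cancel₀ Real.two_pi_pos.ne' hT'
  refine ⟨mod_two_eq_of_neg_one_pow_eq (by norm_num) hsign, hjj', funext fun x => ?_⟩
  induction x using QuotientAddGroup.induction_on with
  | H θ => simpa [φ, hjj'] using congrFun hφ θ

end IndexRep

theorem stmt_9_general (s : AddCircle (2 * Real.pi) → ℂ)
    (hsym : ∀ᵐ x ∂(haarAddCircle : Measure (AddCircle (2 * Real.pi))),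
      s x ≠ 0 ∧ s (-x) = starRingEnd ℂ (s x) ∧ starRingEnd ℂ (s x) = (s x)⁻¹) :
    (∀ᵐ x ∂(haarAddCircle : Measure (AddCircle (2 * Real.pi))), ‖s x‖ = 1) ∧
    (∀ (γ γ' : ℕ) (j j' : ℤ) (w w' : AddCircle (2 * Real.pi) → ℝ),
      Continuous w → (∀ x, w (-x) = -w x) →
      (Summable fun n : ℤ =>
        (|n| : ℝ) * ‖fourierCoeff (fun x : AddCircle (2 * Real.pi) => (w x : ℂ)) n‖ ^ 2) →
      (∀ᵐ x ∂(haarAddCircle : Measure (AddCircle (2 * Real.pi))),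
        s x = (-1 : ℂ) ^ γ * fourier j x * Complex.exp (-Complex.I * (w x : ℂ))) →
      Continuous w' → (∀ x, w' (-x) = -w' x) →
      (Summable fun n : ℤ =>
        (|n| : ℝ) * ‖fourierCoeff (fun x : AddCircle (2 * Real.pi) => (w' x : ℂ)) n‖ ^ 2) →
      (∀ᵐ x ∂(haarAddCircle : Measure (AddCircle (2 * Real.pi))),
        s x = (-1 : ℂ) ^ γ' * fourier j' x * Complex.exp (-Complex.I * (w' x : ℂ))) →
      γ % 2 = γ' % 2 ∧ j = j' ∧ w = w') := by
  refine ⟨?_, fun γ γ' j j' w w' hw hw_odd _ hrep hw' hw'_odd _ hrep' => ?_⟩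
  · filter_upwards [hsym] with x hx
    exact norm_eq_one_of_conj_eq_inv hx.1 hx.2.2
  · have hae : indexRep γ j w =ᵐ[haarAddCircle] indexRep γ' j' w' := by
      filter_upwards [hrep, hrep'] with x hx hx'
      exact hx.symm.trans hx'
    exact indexRep_injective Real.two_pi_pos.ne' hw hw_odd hw' hw'_odd
      ((Continuous.ae_eq_iff_eq _ (continuous_indexRep γ j hw) (continuous_indexRep γ' j' hw')).mp
        hae)

/-- If `s` on the circle satisfies `s(t̄) = conj(s(t)) = 1/s(t)` a.e., then
`|s| = 1` a.e., and the index `(γ mod 2, j)` in any representation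
`s(t) = (-1)^γ tʲ e^{-i w(t)}` (with `w` real, antisymmetric, continuous, in `B₂^{1/2}`)
is uniquely determined by `s`. -/
theorem stmt_9 (s : AddCircle (2 * Real.pi) → ℂ) (hmeas : Measurable s)
    (hsym : ∀ᵐ x ∂(haarAddCircle : Measure (AddCircle (2 * Real.pi))),
      s x ≠ 0 ∧ s (-x) = starRingEnd ℂ (s x) ∧ starRingEnd ℂ (s x) = (s x)⁻¹) :
    (∀ᵐ x ∂(haarAddCircle : Measure (AddCircle (2 * Real.pi))), ‖s x‖ = 1) ∧
    (∀ (γ γ' : ℕ) (j j' : ℤ) (w w' : AddCircle (2 * Real.pi) → ℝ),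
      Continuous w → (∀ x, w (-x) = -w x) →
      (Summable fun n : ℤ =>
        (|n| : ℝ) * ‖fourierCoeff (fun x : AddCircle (2 * Real.pi) => (w x : ℂ)) n‖ ^ 2) →
      (∀ᵐ x ∂(haarAddCircle : Measure (AddCircle (2 * Real.pi))),
        s x = (-1 : ℂ) ^ γ * fourier j x * Complex.exp (-Complex.I * (w x : ℂ))) →
      Continuous w' → (∀ x, w' (-x) = -w' x) →
      (Summable fun n : ℤ =>
        (|n| : ℝ) * ‖fourierCoeff (fun x : AddCircle (2 * Real.pi) => (w' x : ℂ)) n‖ ^ 2) →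
      (∀ᵐ x ∂(haarAddCircle : Measure (AddCircle (2 * Real.pi))),
        s x = (-1 : ℂ) ^ γ' * fourier j' x * Complex.exp (-Complex.I * (w' x : ℂ))) →
      γ % 2 = γ' % 2 ∧ j = j' ∧ w = w') :=
  stmt_9_general s hsym
end

section
/- For 0 ≤ a < 1, the probability measure dμ = c·|1 - at|² dm(t) on the unit circle (c the appropriate normalizing constant) has Verblunsky coefficients α_n = -(a^{-1} - a)/(a^{-n-2} - a^{n+2}) for n = 0,1,2,…, when 0 < a < 1; in particular α_n → 0 exponentially fast. -/
/-!
The weight `c ‖1 - a z‖² = c ((1 + a²) - a z - a z̄)` has only three nonzero Fourier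
coefficients, so orthogonality of `Φₙ₊₁ = ∑ pⱼ zʲ` to `z̄ʲ`, `j ≤ n`, is the three-term recurrence
`(1 + a²) pⱼ = a pⱼ₋₁ + a pⱼ₊₁` (with `p₋₁ = 0`). Then `qⱼ = aʲ pⱼ` satisfies a linear recurrence
with characteristic roots `1` and `a²`, which forces `(a² - 1) qⱼ = p₀ (a²⁽ʲ⁺¹⁾ - 1)`;
at `j = n + 1` monicity gives `p₀ = (1 - a²) aⁿ⁺¹ / (1 - a²ⁿ⁺⁴)`, and `αₙ = -conj p₀`.
-/

open MeasureTheory AddCircle Complex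

open Polynomial ComplexConjugate

theorem Polynomial.toAddCircle_apply (P : ℂ[X]) (x : AddCircle (2 * Real.pi)) :
    P.toAddCircle x = P.eval (fourier 1 x) := by
  simp only [toAddCircle, aeval_continuousMap_apply, ContinuousMap.coe_mk, fourier_apply,
    one_smul]

theorem integral_eval_fourier_one_mul_conj_pow (P : ℂ[X]) (j : ℕ) :
    ∫ x : AddCircle (2 * Real.pi), P.eval (fourier 1 x) * conj (fourier 1 x) ^ j
      ∂haarAddCircle = P.coeff j := by
  rw [← P.fourierCoeff_toAddCircle_natCast j, fourierCoeff]
  congr 1 with x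
  rw [smul_eq_mul, mul_comm, fourier_neg, ← toAddCircle_X_pow_eq_fourier, toAddCircle_apply,
    toAddCircle_apply, eval_pow, eval_X, map_pow]

theorem integrable_eval_fourier_one_mul_conj_pow (P : ℂ[X]) (j : ℕ) :
    Integrable (fun x : AddCircle (2 * Real.pi) =>
      P.eval (fourier 1 x) * conj (fourier 1 x) ^ j) haarAddCircle :=
  Continuous.integrable_of_hasCompactSupport (by fun_prop) (.of_compactSpace _)

theorem integral_withDensity_ofReal_eq_integral_smul {X E : Type*} [MeasurableSpace X]
    [NormedAddCommGroup E] [NormedSpace ℝ E] {μ : Measure X} {w : X → ℝ} (hw : Measurable w)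
    (hw₀ : ∀ x, 0 ≤ w x) (g : X → E) :
    ∫ x, g x ∂μ.withDensity (fun x => ENNReal.ofReal (w x)) = ∫ x, w x • g x ∂μ := by
  rw [integral_withDensity_eq_integral_toReal_smul hw.ennreal_ofReal
    (.of_forall fun _ => ENNReal.ofReal_lt_top)]
  simp only [ENNReal.toReal_ofReal (hw₀ _)]

theorem Complex.sq_norm_one_sub_mul_of_norm_eq_one (a : ℝ) {z : ℂ} (hz : ‖z‖ = 1) :
    ((‖1 - a * z‖ ^ 2 : ℝ) : ℂ) = 1 + a ^ 2 - a * z - a * conj z := by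
  have hzz : z * conj z = 1 := by rw [mul_conj', hz]; simp
  rw [ofReal_pow, ← mul_conj']
  simp only [map_sub, map_one, map_mul, conj_ofReal]
  linear_combination (a : ℂ) ^ 2 * hzz

noncomputable def inverseBernsteinSzegoMeasure (a c : ℝ) : Measure (AddCircle (2 * Real.pi)) :=
  haarAddCircle.withDensity fun x => ENNReal.ofReal (c * ‖1 - (a : ℂ) * fourier 1 x‖ ^ 2)

theorem integral_eval_mul_conj_pow_inverseBernsteinSzegoMeasure (a : ℝ) {c : ℝ} (hc : 0 ≤ c)
    (P : ℂ[X]) (j : ℕ) :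
    ∫ x, P.eval (fourier 1 x) * conj (fourier 1 x) ^ j ∂inverseBernsteinSzegoMeasure a c
      = c * ((1 + a ^ 2) * P.coeff j - a * (X * P).coeff j - a * P.coeff (j + 1)) := by
  have hw : Continuous fun x : AddCircle (2 * Real.pi) => c * ‖1 - (a : ℂ) * fourier 1 x‖ ^ 2 := by
    fun_prop
  have hweight (x : AddCircle (2 * Real.pi)) :
      (c * ‖1 - (a : ℂ) * fourier 1 x‖ ^ 2) • (P.eval (fourier 1 x) * conj (fourier 1 x) ^ j)
        = c * ((1 + a ^ 2) * (P.eval (fourier 1 x) * conj (fourier 1 x) ^ j)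
          - a * ((X * P).eval (fourier 1 x) * conj (fourier 1 x) ^ j)
          - a * (P.eval (fourier 1 x) * conj (fourier 1 x) ^ (j + 1))) := by
    rw [real_smul, ofReal_mul, sq_norm_one_sub_mul_of_norm_eq_one a
      (by rw [fourier_apply]; exact Circle.norm_coe _)]
    simp only [eval_mul, eval_X]
    ring
  have hint := integrable_eval_fourier_one_mul_conj_pow
  rw [inverseBernsteinSzegoMeasure,
    integral_withDensity_ofReal_eq_integral_smul hw.measurable (fun x => by positivity)]
  simp_rw [hweight]
  rw [integral_const_mul, integral_sub, integral_sub]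
  · simp only [integral_const_mul, integral_eval_fourier_one_mul_conj_pow]
  · exact (hint P j).const_mul _
  · exact (hint (X * P) j).const_mul _
  · exact ((hint P j).const_mul _).sub ((hint (X * P) j).const_mul _)
  · exact (hint P (j + 1)).const_mul _

theorem Polynomial.sq_sub_one_mul_pow_mul_coeff_of_recurrence {R : Type*} [CommRing R]
    (a : R) (P : R[X]) (n : ℕ) (hrec : ∀ j ≤ n, (1 + a ^ 2) * P.coeff j = a * (X * P).coeff j + a * P.coeff (j + 1)) :
    ∀ j ≤ n + 1, (a ^ 2 - 1) * a ^ j * P.coeff j = P.coeff 0 * (a ^ (2 * j + 2) - 1) := by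
  suffices h : ∀ j ≤ n, (a ^ 2 - 1) * a ^ j * P.coeff j = P.coeff 0 * (a ^ (2 * j + 2) - 1) ∧
      (a ^ 2 - 1) * a ^ (j + 1) * P.coeff (j + 1) = P.coeff 0 * (a ^ (2 * (j + 1) + 2) - 1) by
    rintro (_ | j) hj
    · ring
    · exact (h j (by omega)).2
  intro j hj
  induction j with
  | zero =>
    have h₀ := hrec 0 (by omega)
    rw [coeff_X_mul_zero] at h₀
    exact ⟨by ring, by linear_combination (1 - a ^ 2) * h₀⟩
  | succ j ih =>
    obtain ⟨hj₀, hj₁⟩ := ih (by omega)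
    have h := hrec (j + 1) hj
    rw [coeff_X_mul] at h
    refine ⟨hj₁, ?_⟩
    linear_combination (a ^ 2 + 1) * hj₁ - a ^ 2 * hj₀ - (a ^ 2 - 1) * a ^ (j + 1) * h

theorem coeff_zero_mul_of_orthogonal_inverseBernsteinSzegoMeasure (a : ℝ) {c : ℝ} (hc : 0 < c)
    {P : ℂ[X]} {n : ℕ} (hP : P.Monic) (hdeg : P.natDegree = n + 1)
    (horth : ∀ j < n + 1,
      ∫ x, P.eval (fourier 1 x) * conj (fourier 1 x) ^ j ∂inverseBernsteinSzegoMeasure a c = 0) :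
    P.coeff 0 * (1 - (a : ℂ) ^ (2 * n + 4)) = (1 - (a : ℂ) ^ 2) * (a : ℂ) ^ (n + 1) := by
  have hrec (j : ℕ) (hj : j ≤ n) :
      (1 + (a : ℂ) ^ 2) * P.coeff j = a * (X * P).coeff j + a * P.coeff (j + 1) := by
    have h := horth j (by omega)
    rw [integral_eval_mul_conj_pow_inverseBernsteinSzegoMeasure a hc.le, mul_eq_zero,
      or_iff_right (ofReal_ne_zero.2 hc.ne')] at h
    linear_combination h
  have h := P.sq_sub_one_mul_pow_mul_coeff_of_recurrence (a : ℂ) n hrec (n + 1) le_rfl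
  rw [← hdeg, hP.coeff_natDegree, hdeg] at h
  linear_combination h

theorem inv_sub_div_zpow_sub_zpow_eq {a : ℝ} (ha : a ≠ 0) (n : ℕ) :
    (a⁻¹ - a) / (a ^ (-(n : ℤ) - 2) - a ^ ((n : ℤ) + 2))
      = (1 - a ^ 2) * a ^ (n + 1) / (1 - a ^ (2 * n + 4)) := by
  have h₁ : a ^ (-(n : ℤ) - 2) = (a ^ (n + 2))⁻¹ := by
    rw [← zpow_natCast, ← zpow_neg]; push_cast; ring_nf
  have h₂ : a ^ ((n : ℤ) + 2) = a ^ (n + 2) := by norm_cast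
  have hb : a ^ (n + 2) ≠ 0 := pow_ne_zero _ ha
  rw [h₁, h₂, show a⁻¹ - a = a⁻¹ * (1 - a ^ 2) by field_simp,
    show (a ^ (n + 2))⁻¹ - a ^ (n + 2) = (a ^ (n + 2))⁻¹ * (1 - a ^ (2 * n + 4)) by
      field_simp; ring,
    mul_div_mul_comm, inv_div_inv, show a ^ (n + 2) / a = a ^ (n + 1) by field_simp; ring]
  ring

theorem abs_one_sub_sq_mul_pow_div_le {a : ℝ} (ha₀ : 0 ≤ a) (ha₁ : a < 1) (n : ℕ) :
    |(1 - a ^ 2) * a ^ (n + 1) / (1 - a ^ (2 * n + 4))| ≤ a ^ (n + 1) := by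
  have h₂ : a ^ (2 * n + 4) ≤ a ^ 2 := pow_le_pow_of_le_one ha₀ ha₁.le (by omega)
  have h₁ : a ^ (2 * n + 4) < 1 := pow_lt_one₀ ha₀ ha₁ (by omega)
  have hpow := pow_nonneg ha₀ (n + 1)
  rw [abs_of_nonneg (div_nonneg (mul_nonneg (by nlinarith) hpow) (by linarith)),
    div_le_iff₀ (by linarith)]
  nlinarith

theorem stmt_14_general (a : ℝ) (ha : 0 < a) (ha1 : a < 1) (c : ℝ) (hc : 0 < c)
    (μ : Measure (AddCircle (2 * Real.pi)))
    (hμ : μ = (haarAddCircle : Measure (AddCircle (2 * Real.pi))).withDensity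
      (fun x => ENNReal.ofReal (c * ‖1 - (a : ℂ) * fourier 1 x‖ ^ 2)))
    (Φ : ℕ → Polynomial ℂ)
    (hmonic : ∀ n, (Φ n).Monic ∧ (Φ n).natDegree = n)
    (horth : ∀ n, ∀ j < n,
      ∫ x, (Φ n).eval (fourier 1 x) * (starRingEnd ℂ (fourier 1 x)) ^ j ∂μ = 0)
    (α : ℕ → ℂ) (hα : ∀ n, α n = -starRingEnd ℂ ((Φ (n + 1)).eval 0)) :
    (∀ n : ℕ, α n = (↑(-(a⁻¹ - a) / (a ^ (-(n : ℤ) - 2) - a ^ ((n : ℤ) + 2))) : ℂ)) ∧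
      ∃ C : ℝ, 0 < C ∧ ∀ n : ℕ, ‖α n‖ ≤ C * a ^ n := by
  replace hμ : μ = inverseBernsteinSzegoMeasure a c := hμ
  subst hμ
  have hα' (n : ℕ) : α n = ((-((1 - a ^ 2) * a ^ (n + 1) / (1 - a ^ (2 * n + 4))) : ℝ) : ℂ) := by
    have hden : (1 : ℂ) - (a : ℂ) ^ (2 * n + 4) ≠ 0 := by
      exact_mod_cast (sub_pos.2 (pow_lt_one₀ ha.le ha1 (by omega))).ne'
    have h := coeff_zero_mul_of_orthogonal_inverseBernsteinSzegoMeasure a hc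
      (hmonic (n + 1)).1 (hmonic (n + 1)).2 (horth (n + 1))
    have hp₀ : (Φ (n + 1)).coeff 0
        = (((1 - a ^ 2) * a ^ (n + 1) / (1 - a ^ (2 * n + 4)) : ℝ) : ℂ) := by
      push_cast
      exact eq_div_of_mul_eq hden h
    rw [hα, ← coeff_zero_eq_eval_zero, hp₀, conj_ofReal, ofReal_neg]
  refine ⟨fun n => by rw [hα', neg_div, inv_sub_div_zpow_sub_zpow_eq ha.ne'], a, ha, fun n => ?_⟩
  rw [hα', norm_real, Real.norm_eq_abs, abs_neg, ← pow_succ']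
  exact abs_one_sub_sq_mul_pow_div_le ha.le ha1 n

/-- For `0 < a < 1`, the probability measure `dμ = c·|1-at|² dm(t)` on the
circle (with normalizing constant `c`) has Verblunsky coefficients
`αₙ = -(a⁻¹ - a)/(a^{-n-2} - a^{n+2})`; in particular `αₙ → 0` exponentially fast. -/
theorem stmt_14 (a : ℝ) (ha : 0 < a) (ha1 : a < 1) (c : ℝ) (hc : 0 < c)
    (μ : Measure (AddCircle (2 * Real.pi)))
    (hμ : μ = (haarAddCircle : Measure (AddCircle (2 * Real.pi))).withDensity
      (fun x => ENNReal.ofReal (c * ‖1 - (a : ℂ) * fourier 1 x‖ ^ 2)))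
    (hprob : IsProbabilityMeasure μ)
    (Φ : ℕ → Polynomial ℂ)
    (hmonic : ∀ n, (Φ n).Monic ∧ (Φ n).natDegree = n)
    (horth : ∀ n, ∀ j < n,
      ∫ x, (Φ n).eval (fourier 1 x) * (starRingEnd ℂ (fourier 1 x)) ^ j ∂μ = 0)
    (α : ℕ → ℂ) (hα : ∀ n, α n = -starRingEnd ℂ ((Φ (n + 1)).eval 0)) :
    (∀ n : ℕ, α n = (↑(-(a⁻¹ - a) / (a ^ (-(n : ℤ) - 2) - a ^ ((n : ℤ) + 2))) : ℂ)) ∧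
      ∃ C : ℝ, 0 < C ∧ ∀ n : ℕ, ‖α n‖ ≤ C * a ^ n :=
  stmt_14_general a ha ha1 c hc μ hμ Φ hmonic horth α hα
end
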